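/- For every natural number p: the m-value of the word a^p equals F(2p), and the m-value of a^p·b equals F(2p+1), where F is the Fibonacci sequence. -/

import Mathlib

def A : Matrix (Fin 2) (Fin 2) ℤ := !![1,1;1,2]
def B : Matrix (Fin 2) (Fin 2) ℤ := !![2,1;1,1]
/-- matrix of a word: `false` is the letter `a`, `true` is the letter `b` -/
def Mw (w : List Bool) : Matrix (Fin 2) (Fin 2) ℤ :=
  (w.map (fun x => if x then B else A)).prod
/-- the m-value: the top-right entry -/
def mval (w : List Bool) : ℤ := Mw w 0 1
def U : Matrix (Fin 2) (Fin 2) ℤ := !![0,-1;1,0]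
def J : Matrix (Fin 2) (Fin 2) ℤ := !![0,1;1,0]
/-- reversal with letters exchanged -/
def Ebar (w : List Bool) : List Bool := (w.map (fun x => !x)).reverse
def pell : ℕ → ℕ
  | 0 => 0
  | 1 => 1
  | n+2 => 2 * pell (n+1) + pell n

/-! The matrix `A` is the square of the Fibonacci matrix `Q = !![0,1;1,1]`, whose powers carry
consecutive Fibonacci numbers, so `M(aᵖ) = Q²ᵖ`. Appending `b` multiplies on the right by `B`,
whose second column is `(1, 1)`, so the top-right entry becomes the sum of the top row of `Q²ᵖ`,
that is `F(2p-1) + F(2p) = F(2p+1)`. -/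

def fibMatrix : Matrix (Fin 2) (Fin 2) ℤ := !![0,1;1,1]

-- The top-left entry is `F(n-1)`, written so that it also reads `1` at `n = 0`.
lemma fibMatrix_pow (n : ℕ) :
    fibMatrix ^ n =
      !![(Nat.fib (n+1) : ℤ) - Nat.fib n, (Nat.fib n : ℤ); (Nat.fib n : ℤ), (Nat.fib (n+1) : ℤ)] := by
  induction n with
  | zero => simp [Matrix.one_fin_two]
  | succ n ih =>
    rw [pow_succ, ih, fibMatrix, Matrix.mul_fin_two, Nat.fib_add_two]
    ext i j
    fin_cases i <;> fin_cases j <;> simp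

lemma A_eq_fibMatrix_sq : A = fibMatrix ^ 2 := by
  rw [sq, fibMatrix, Matrix.mul_fin_two, A]
  norm_num

lemma Mw_replicate_false (p : ℕ) : Mw (List.replicate p false) = A ^ p := by
  simp [Mw, List.map_replicate, List.prod_replicate]

lemma Mw_append (v w : List Bool) : Mw (v ++ w) = Mw v * Mw w := by
  simp [Mw, List.prod_append]

theorem stmt15 (p : ℕ) :
    mval (List.replicate p false) = (Nat.fib (2*p) : ℤ) ∧
    mval (List.replicate p false ++ [true]) = (Nat.fib (2*p+1) : ℤ) := by
  have hpow : Mw (List.replicate p false) =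
      !![(Nat.fib (2*p+1) : ℤ) - Nat.fib (2*p), (Nat.fib (2*p) : ℤ);
         (Nat.fib (2*p) : ℤ), (Nat.fib (2*p+1) : ℤ)] := by
    rw [Mw_replicate_false, A_eq_fibMatrix_sq, ← pow_mul, fibMatrix_pow]
  have hb : Mw [true] = B := by simp [Mw]
  refine ⟨by simp [mval, hpow], ?_⟩
  rw [mval, Mw_append, hpow, hb, B, Matrix.mul_fin_two]
  simp
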